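/- There exists a Banach limit B on ℓ∞ which is invariant under every dilation operator, i.e. B(σ_m x) = B(x) for all m ≥ 2 and all x ∈ ℓ∞, but which is not invariant under the Cesàro operator, i.e. there exists x ∈ ℓ∞ with B(Cx) ≠ B(x). In other words, the inclusion 𝔅(C) ⊆ ∩_{m≥2} 𝔅(σ_m) is proper. -/

import Mathlib

open Filter BoundedContinuousFunction

noncomputable section

/-- `ℓ∞`: the space of bounded real sequences (indexed from `0`). -/
abbrev LInf : Type := BoundedContinuousFunction ℕ ℝ

/-- The translation (shift) operator `T(x₁,x₂,…) = (0,x₁,x₂,…)` (0-indexed). -/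
def shift (x : LInf) : LInf :=
  BoundedContinuousFunction.ofNormedAddCommGroup
    (fun n => if n = 0 then 0 else x (n - 1)) continuous_of_discreteTopology ‖x‖
    (by
      intro n
      rcases n with _ | n
      · simp [norm_nonneg x]
      · simpa using x.norm_coe_le_norm n)

/-- The Cesàro operator: the `n`-th entry (0-indexed) is the average of the first `n + 1`
entries, i.e. `(Cx)ₙ = (1/n) ∑_{k=1}^{n} x_k` in the 1-indexed notation. -/
def cesaro (x : LInf) : LInf :=
  BoundedContinuousFunction.ofNormedAddCommGroup
    (fun n => (↑(n + 1))⁻¹ * ∑ k ∈ Finset.range (n + 1), x k)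
    continuous_of_discreteTopology ‖x‖
    (by
      intro n
      have hn : (0:ℝ) < (n:ℝ) + 1 := by positivity
      have h1 : ‖∑ k ∈ Finset.range (n + 1), x k‖ ≤ ‖x‖ * ((n:ℝ) + 1) := by
        calc ‖∑ k ∈ Finset.range (n + 1), x k‖ ≤ ∑ k ∈ Finset.range (n + 1), ‖x‖ :=
              norm_sum_le_of_le _ (fun k _ => x.norm_coe_le_norm k)
          _ = ‖x‖ * ((n:ℝ) + 1) := by simp [mul_comm]
      rw [norm_mul, norm_inv]
      have h2 : ‖((n+1 : ℕ) : ℝ)‖ = (n:ℝ) + 1 := by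
        push_cast
        rw [Real.norm_eq_abs, abs_of_pos hn]
      rw [h2, inv_mul_le_iff₀ hn]
      exact h1.trans_eq (mul_comm _ _))

/-- The dilation operator `σ_m`, repeating each entry `m` times
(0-indexed: `(σ_m x)ₙ = x_{⌊n/m⌋}`, i.e. `(σ_m x)ₙ = x_{⌈n/m⌉}` in 1-indexed notation). -/
def dil (m : ℕ) (x : LInf) : LInf :=
  x.compContinuous ⟨fun n => n / m, continuous_of_discreteTopology⟩

/-- A Banach limit: a positive, normalised, shift-invariant continuous linear
functional on `ℓ∞`. -/
def IsBanachLimit (B : LInf →L[ℝ] ℝ) : Prop :=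
  (∀ x : LInf, (∀ n, 0 ≤ x n) → 0 ≤ B x) ∧ B 1 = 1 ∧ ∀ x : LInf, B (shift x) = B x

/-! The Banach limit is a limit, along an ultrafilter finer than `atTop`, of the means
`scaleMean k`: the average over `d ∣ modulus k` of the averages of `x` over the windows
`[base k * d, base k * d + (k + 1) * d)`. These windows have length at least `k + 1`, so shifting
changes `scaleMean k` by `O(1 / k)`. A prime `p ≤ k + 1` divides `modulus k = ((k + 1)!) ^ (k + 1)`
with multiplicity `v ≥ k + 1`; `dil p` carries the windows with `p ∣ d` onto those with
`d ∣ modulus k / p`, and the windows left over carry weight `1 / (v + 1)` on each side. So the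
limit is invariant under prime dilations, hence under all of them.

The indicator of the union of all windows has all means `1`. But `base k` dwarfs both everything
at smaller scales and the total length of the windows of scale `k` below any given point, so its
Cesàro transform is at most `2 / (k + 1)` on the windows of scale `k`. -/

open Filter Topology Finset
open scoped BigOperators Nat

theorem StrongDual.exists_tendsto_ultrafilter_of_norm_le {ι E : Type*}
    [SeminormedAddCommGroup E] [NormedSpace ℝ E] (U : Ultrafilter ι)
    (A : ι → StrongDual ℝ E) {r : ℝ} (hA : ∀ i, ‖A i‖ ≤ r) :
    ∃ B : StrongDual ℝ E, ∀ x, Tendsto (fun i => A i x) U (𝓝 (B x)) := by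
  obtain ⟨B, -, hB⟩ := (WeakDual.isCompact_closedBall (0 : StrongDual ℝ E) r).ultrafilter_le_nhds
    (U.map fun i => StrongDual.toWeakDual (A i)) (by simp [Set.preimage, hA])
  exact ⟨WeakDual.toStrongDual B, fun x => ((WeakDual.eval_continuous x).tendsto B).comp hB⟩

theorem tendsto_div_natCast_add_one (c : ℝ) :
    Tendsto (fun k : ℕ => c / (k + 1)) atTop (𝓝 0) := by
  simpa [div_eq_mul_inv] using tendsto_one_div_add_atTop_nhds_zero_nat.const_mul c

theorem Finset.abs_expect_le_of_forall {ι : Type*} {s : Finset ι} {f : ι → ℝ} {c : ℝ}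
    (hc : 0 ≤ c) (h : ∀ i ∈ s, |f i| ≤ c) : |𝔼 i ∈ s, f i| ≤ c := by
  rcases s.eq_empty_or_nonempty with rfl | hs
  · simpa using hc
  · exact (abs_expect_le s f).trans (expect_le hs h)

theorem Finset.abs_sum_sub_sum_le_of_sum_eq {ι : Type*} [DecidableEq ι] {s t u : Finset ι}
    {f g : ι → ℝ} {C : ℝ} (ht : t ⊆ s) (hu : u ⊆ s) (hcard : #t = #u)
    (hsum : ∑ i ∈ t, f i = ∑ i ∈ u, g i)
    (hf : ∀ i ∈ s, |f i| ≤ C) (hg : ∀ i ∈ s, |g i| ≤ C) :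
    |∑ i ∈ s, f i - ∑ i ∈ s, g i| ≤ 2 * C * (#s - #u) := by
  have hrest (v : Finset ι) (hv : v ⊆ s) (h : ι → ℝ) (hh : ∀ i ∈ s, |h i| ≤ C) :
      |∑ i ∈ s \ v, h i| ≤ C * (#s - #v) :=
    calc |∑ i ∈ s \ v, h i| ≤ ∑ i ∈ s \ v, |h i| := abs_sum_le_sum_abs _ _
      _ ≤ #(s \ v) • C := sum_le_card_nsmul _ _ _ fun i hi => hh i (sdiff_subset hi)
      _ = C * (#s - #v) := by
        rw [card_sdiff_of_subset hv, nsmul_eq_mul, Nat.cast_sub (card_le_card hv), mul_comm]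
  rw [← sum_sdiff ht, ← sum_sdiff hu, hsum, add_sub_add_right_eq_sub]
  have hf' := hrest t ht f hf
  rw [hcard] at hf'
  linarith [abs_sub (∑ i ∈ s \ t, f i) (∑ i ∈ s \ u, g i), hrest u hu g hg]

theorem Finset.sum_range_mul_div {M : Type*} [AddCommMonoid M] (f : ℕ → M) {p : ℕ} (hp : 0 < p)
    (L : ℕ) : ∑ j ∈ range (p * L), f (j / p) = p • ∑ i ∈ range L, f i := by
  induction L with
  | zero => simp
  | succ L ih =>
    have hblock : ∀ j ∈ range p, f ((p * L + j) / p) = f L := fun j hj => by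
      rw [Nat.mul_add_div hp, Nat.div_eq_of_lt (mem_range.1 hj), add_zero]
    rw [mul_add_one, sum_range_add, ih, sum_congr rfl hblock, sum_const, card_range,
      sum_range_succ, smul_add]

theorem Nat.divisors_filter_dvd_eq_image {n p : ℕ} (hp : 0 < p) (hpn : p ∣ n) :
    {d ∈ n.divisors | p ∣ d} = (n / p).divisors.image (p * ·) := by
  ext d
  simp only [mem_filter, Nat.mem_divisors, mem_image]
  constructor
  · rintro ⟨⟨hdn, hn⟩, c, rfl⟩
    refine ⟨c, ⟨(Nat.dvd_div_iff_mul_dvd hpn).2 hdn, ?_⟩, rfl⟩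
    simp [Nat.div_eq_zero_iff, hp.ne', Nat.le_of_dvd (Nat.pos_of_ne_zero hn) hpn]
  · rintro ⟨c, ⟨hc, hn⟩, rfl⟩
    exact ⟨⟨(Nat.dvd_div_iff_mul_dvd hpn).1 hc, fun h => hn (by simp [h])⟩, dvd_mul_right p c⟩

theorem Nat.card_divisors_eq_mul_card_sub {n p : ℕ} (hp : p.Prime) (hpn : p ∣ n) (hn : n ≠ 0) :
    #n.divisors = (n.factorization p + 1) * (#n.divisors - #(n / p).divisors) := by
  obtain ⟨e, he⟩ : ∃ e, n.factorization p = e + 1 :=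
    Nat.exists_eq_add_one.2 (hp.factorization_pos_of_dvd hn hpn)
  obtain ⟨S, hcop, rfl⟩ : ∃ S, Nat.Coprime p S ∧ n = p ^ (e + 1) * S :=
    ⟨_, Nat.coprime_ordCompl hp hn, by rw [← he, Nat.ordProj_mul_ordCompl_eq_self]⟩
  have hcard (i : ℕ) : #(p ^ i * S).divisors = (i + 1) * #S.divisors := by
    rw [Nat.Coprime.card_divisors_mul (hcop.pow_left i), Nat.divisors_prime_pow hp, card_map,
      card_range]
  rw [he, pow_succ', mul_assoc, Nat.mul_div_cancel_left _ hp.pos, ← mul_assoc, ← pow_succ',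
    hcard, hcard, ← Nat.sub_mul, add_tsub_cancel_left, one_mul]

namespace DilationBanachLimit

theorem shift_apply_succ (x : LInf) (n : ℕ) : shift x (n + 1) = x n := by
  simp [shift]

theorem dil_one (x : LInf) : dil 1 x = x := by
  ext n
  exact congrArg x (Nat.div_one n)

theorem dil_mul (a b : ℕ) (x : LInf) : dil (a * b) x = dil a (dil b x) := by
  ext n
  exact congrArg x (Nat.div_div_eq_div_mul n a b).symm

theorem cesaro_apply (x : LInf) (n : ℕ) :
    cesaro x n = (∑ k ∈ range (n + 1), x k) / (n + 1) := by
  simp [cesaro, div_eq_inv_mul]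

def windowMean (L a : ℕ) (x : ℕ → ℝ) : ℝ := 𝔼 j ∈ range L, x (a + j)

theorem abs_windowMean_le {L a : ℕ} {x : ℕ → ℝ} {C : ℝ} (hx : ∀ n, |x n| ≤ C) :
    |windowMean L a x| ≤ C :=
  abs_expect_le_of_forall ((abs_nonneg _).trans (hx 0)) fun _ _ => hx _

theorem windowMean_succ_sub (L a : ℕ) (x : ℕ → ℝ) :
    windowMean L (a + 1) x - windowMean L a x = (x (a + L) - x a) / L := by
  simp only [windowMean, expect_eq_sum_div_card, card_range, ← sub_div, ← sum_sub_distrib]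
  congr 1
  simpa [add_right_comm a 1, ← add_assoc] using sum_range_sub (fun j => x (a + j)) L

theorem windowMean_dil {p : ℕ} (hp : 0 < p) (L a : ℕ) (x : ℕ → ℝ) :
    windowMean (p * L) (p * a) (fun n => x (n / p)) = windowMean L a x := by
  have hshift : ∀ j, (p * a + j) / p = a + j / p := fun j => Nat.mul_add_div hp a j
  simp only [windowMean, expect_eq_sum_div_card, card_range, hshift,
    sum_range_mul_div (fun i => x (a + i)) hp, nsmul_eq_mul]
  push_cast
  rw [mul_div_mul_left _ _ (by exact_mod_cast hp.ne')]

theorem windowMean_eq_of_forall {L a : ℕ} {x : ℕ → ℝ} {c : ℝ} (hL : 0 < L)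
    (h : ∀ j < L, x (a + j) = c) : windowMean L a x = c := by
  rw [windowMean, expect_congr rfl fun j hj => h j (mem_range.1 hj), expect_const]
  exact nonempty_range_iff.2 hL.ne'

theorem abs_apply_le_norm (x : LInf) (n : ℕ) : |x n| ≤ ‖x‖ :=
  (Real.norm_eq_abs _).symm.trans_le (x.norm_coe_le_norm n)

def modulus (k : ℕ) : ℕ := (k + 1)! ^ (k + 1)

def scaleEnd : ℕ → ℕ
  | 0 => 0
  | k + 1 => ((k + 1) ^ 2 * #(modulus k).divisors * (scaleEnd k + 1) + k + 1) * modulus k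

/-- The factor `(k + 1) ^ 2 * #(modulus k).divisors` makes the windows of scale `k` sparse, the
factor `scaleEnd k + 1` makes all smaller scales negligible. -/
def base (k : ℕ) : ℕ := (k + 1) ^ 2 * #(modulus k).divisors * (scaleEnd k + 1)

theorem scaleEnd_succ (k : ℕ) : scaleEnd (k + 1) = (base k + k + 1) * modulus k := rfl

theorem modulus_pos (k : ℕ) : 0 < modulus k := pow_pos (Nat.factorial_pos _) _

theorem divisors_modulus_nonempty (k : ℕ) : (modulus k).divisors.Nonempty :=
  Nat.nonempty_divisors.2 (modulus_pos k).ne'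

theorem succ_mul_scaleEnd_lt_base (k : ℕ) : (k + 1) * scaleEnd k < base k := by
  have hτ : 0 < #(modulus k).divisors := (divisors_modulus_nonempty k).card_pos
  calc (k + 1) * scaleEnd k < (k + 1) * (scaleEnd k + 1) := by gcongr; omega
    _ ≤ (k + 1) * (k + 1) * #(modulus k).divisors * (scaleEnd k + 1) := by
      gcongr
      nlinarith
    _ = base k := by rw [base, sq]

theorem sq_mul_card_divisors_le_base (k : ℕ) :
    (k + 1) ^ 2 * #(modulus k).divisors ≤ base k :=
  Nat.le_mul_of_pos_right _ (scaleEnd k).succ_pos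

theorem scaleEnd_lt_base (k : ℕ) : scaleEnd k < base k :=
  (Nat.le_mul_of_pos_left _ k.succ_pos).trans_lt (succ_mul_scaleEnd_lt_base k)

theorem base_le_scaleEnd_succ (k : ℕ) : base k ≤ scaleEnd (k + 1) := by
  rw [scaleEnd_succ]
  exact le_trans (by omega) (Nat.le_mul_of_pos_right (base k + k + 1) (modulus_pos k))

theorem scaleEnd_strictMono : StrictMono scaleEnd :=
  strictMono_nat_of_lt_succ fun k => (scaleEnd_lt_base k).trans_le (base_le_scaleEnd_succ k)

theorem base_mul_add_mem_Ico {k d j : ℕ} (hd : d ∈ (modulus k).divisors) (hj : j < (k + 1) * d) :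
    base k * d + j ∈ Ico (base k) (scaleEnd (k + 1)) := by
  have hd0 := Nat.pos_of_mem_divisors hd
  have hdR := Nat.divisor_le hd
  refine mem_Ico.2 ⟨?_, ?_⟩
  · exact (Nat.le_mul_of_pos_right _ hd0).trans (Nat.le_add_right _ _)
  · calc base k * d + j < base k * d + (k + 1) * d := by omega
      _ = (base k + k + 1) * d := by ring
      _ ≤ scaleEnd (k + 1) := by rw [scaleEnd_succ]; gcongr

def scaleMean (k : ℕ) : StrongDual ℝ LInf :=
  LinearMap.mkContinuous
    { toFun := fun x => 𝔼 d ∈ (modulus k).divisors, windowMean ((k + 1) * d) (base k * d) x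
      map_add' := fun x y => by
        simp only [windowMean, BoundedContinuousFunction.coe_add, Pi.add_apply, expect_add_distrib]
      map_smul' := fun c x => by
        simp only [windowMean, BoundedContinuousFunction.coe_smul, smul_eq_mul, mul_expect,
          RingHom.id_apply] } 1
    fun x => by
      rw [one_mul, Real.norm_eq_abs]
      exact abs_expect_le_of_forall (norm_nonneg x) fun d _ =>
        abs_windowMean_le (abs_apply_le_norm x)

theorem scaleMean_apply (k : ℕ) (x : LInf) :
    scaleMean k x = 𝔼 d ∈ (modulus k).divisors, windowMean ((k + 1) * d) (base k * d) x := rfl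

theorem norm_scaleMean_le (k : ℕ) : ‖scaleMean k‖ ≤ 1 :=
  LinearMap.mkContinuous_norm_le _ zero_le_one _

theorem scaleMean_nonneg (k : ℕ) {x : LInf} (hx : ∀ n, 0 ≤ x n) : 0 ≤ scaleMean k x :=
  expect_nonneg fun _ _ => expect_nonneg fun _ _ => hx _

theorem scaleMean_eq_of_forall {k : ℕ} {x : LInf} {c : ℝ}
    (h : ∀ d ∈ (modulus k).divisors, ∀ j < (k + 1) * d, x (base k * d + j) = c) :
    scaleMean k x = c := by
  rw [scaleMean_apply, expect_congr rfl fun d hd => windowMean_eq_of_forall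
    (Nat.mul_pos k.succ_pos (Nat.pos_of_mem_divisors hd)) (h d hd)]
  exact expect_const (divisors_modulus_nonempty k) c

theorem scaleMean_one (k : ℕ) : scaleMean k 1 = 1 :=
  scaleMean_eq_of_forall fun _ _ _ _ => rfl

theorem scaleMean_le_of_forall {k : ℕ} {x : LInf} {c : ℝ}
    (h : ∀ d ∈ (modulus k).divisors, ∀ j < (k + 1) * d, x (base k * d + j) ≤ c) :
    scaleMean k x ≤ c :=
  expect_le (divisors_modulus_nonempty k) fun d hd => expect_le
    (nonempty_range_iff.2 (Nat.mul_pos k.succ_pos (Nat.pos_of_mem_divisors hd)).ne')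
    fun j hj => h d hd j (mem_range.1 hj)

theorem abs_scaleMean_shift_sub_le (k : ℕ) (x : LInf) :
    |scaleMean k (shift x) - scaleMean k x| ≤ 2 * ‖x‖ / (k + 1) := by
  rw [scaleMean_apply, scaleMean_apply, ← expect_sub_distrib]
  refine abs_expect_le_of_forall (by positivity) fun d hd => ?_
  have hd0 := Nat.pos_of_mem_divisors hd
  obtain ⟨a, ha⟩ : ∃ a, base k * d = a + 1 :=
    Nat.exists_eq_add_one.2 (Nat.mul_pos ((Nat.zero_le _).trans_lt (scaleEnd_lt_base k)) hd0)
  have hshift : windowMean ((k + 1) * d) (a + 1) (shift x) = windowMean ((k + 1) * d) a x := by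
    simp only [windowMean, add_right_comm a 1, shift_apply_succ]
  have hL : (k + 1 : ℝ) ≤ ((k + 1) * d : ℕ) := by
    exact_mod_cast Nat.le_mul_of_pos_right _ hd0
  rw [ha, hshift, ← neg_sub, abs_neg, windowMean_succ_sub, abs_div, Nat.abs_cast]
  calc |x (a + (k + 1) * d) - x a| / ((k + 1) * d : ℕ) ≤ 2 * ‖x‖ / ((k + 1) * d : ℕ) := by
        gcongr
        linarith [abs_sub (x (a + (k + 1) * d)) (x a), abs_apply_le_norm x (a + (k + 1) * d),
          abs_apply_le_norm x a]
    _ ≤ 2 * ‖x‖ / (k + 1) := by gcongr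

theorem sum_filter_dvd_windowMean_dil {k p : ℕ} (hp : 0 < p) (hpR : p ∣ modulus k) (x : LInf) :
    ∑ d ∈ (modulus k).divisors with p ∣ d, windowMean ((k + 1) * d) (base k * d) (dil p x) =
      ∑ d ∈ (modulus k / p).divisors, windowMean ((k + 1) * d) (base k * d) x := by
  rw [Nat.divisors_filter_dvd_eq_image hp hpR, sum_image (mul_right_injective₀ hp.ne').injOn]
  refine sum_congr rfl fun d _ => ?_
  simp only [mul_left_comm _ p d]
  exact windowMean_dil hp _ _ x

theorem abs_scaleMean_dil_sub_le {k p : ℕ} (hp : p.Prime) (hpk : p ≤ k + 1) (x : LInf) :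
    |scaleMean k (dil p x) - scaleMean k x| ≤ 2 * ‖x‖ / (k + 1) := by
  set R := modulus k
  have hR : R ≠ 0 := (modulus_pos k).ne'
  have hpkR : p ^ (k + 1) ∣ R := pow_dvd_pow_of_dvd (Nat.dvd_factorial hp.pos hpk) _
  have hpR : p ∣ R := (dvd_pow_self p k.succ_ne_zero).trans hpkR
  have hsub : (R / p).divisors ⊆ R.divisors :=
    Nat.divisors_subset_of_dvd hR (Nat.div_dvd_of_dvd hpR)
  have hcard : #{d ∈ R.divisors | p ∣ d} = #(R / p).divisors := by
    rw [Nat.divisors_filter_dvd_eq_image hp.pos hpR,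
      card_image_of_injective _ (mul_right_injective₀ hp.ne_zero)]
  have key := abs_sum_sub_sum_le_of_sum_eq (filter_subset _ _) hsub hcard
    (sum_filter_dvd_windowMean_dil hp.pos hpR x)
    (fun d _ => abs_windowMean_le fun n => abs_apply_le_norm x (n / p))
    (fun d _ => abs_windowMean_le (abs_apply_le_norm x))
  rw [← Nat.cast_sub (card_le_card hsub)] at key
  have hmult : k + 1 ≤ R.factorization p := (hp.pow_dvd_iff_le_factorization hR).1 hpkR
  have hτ := Nat.card_divisors_eq_mul_card_sub hp hpR hR
  set m := #R.divisors - #(R / p).divisors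
  have hm : (0 : ℝ) < m := by
    have := (divisors_modulus_nonempty k).card_pos
    exact_mod_cast Nat.pos_of_mul_pos_left (hτ ▸ this)
  rw [scaleMean_apply, scaleMean_apply, expect_eq_sum_div_card, expect_eq_sum_div_card, ← sub_div,
    abs_div, Nat.abs_cast, hτ]
  calc _ ≤ 2 * ‖x‖ * m / ((R.factorization p + 1) * m) := by push_cast; gcongr
    _ = 2 * ‖x‖ / (R.factorization p + 1) := mul_div_mul_right _ _ hm.ne'
    _ ≤ 2 * ‖x‖ / (k + 1) := by
      gcongr
      exact_mod_cast k.le_succ.trans hmult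

def windowSet : Set ℕ :=
  {n | ∃ k, ∃ d ∈ (modulus k).divisors, ∃ j < (k + 1) * d, n = base k * d + j}

open Classical in
def windowIndicator : LInf :=
  BoundedContinuousFunction.ofNormedAddCommGroup (fun n => if n ∈ windowSet then 1 else 0)
    continuous_of_discreteTopology 1 fun n => by split_ifs <;> simp

theorem scaleMean_windowIndicator (k : ℕ) : scaleMean k windowIndicator = 1 :=
  scaleMean_eq_of_forall fun d hd j hj => if_pos ⟨k, d, hd, j, hj, rfl⟩

open Classical in
theorem filter_windowSet_subset {k n : ℕ} (hn : n < scaleEnd (k + 1)) :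
    {j ∈ range (n + 1) | j ∈ windowSet} ⊆ range (scaleEnd k) ∪
      {d ∈ (modulus k).divisors | base k * d ≤ n}.biUnion
        fun d => Ico (base k * d) (base k * d + (k + 1) * d) := by
  intro j hj
  obtain ⟨hjn, k', d, hd, i, hi, rfl⟩ := mem_filter.1 hj
  have hjn := Nat.lt_succ_iff.1 (mem_range.1 hjn)
  have hwin := mem_Ico.1 (base_mul_add_mem_Ico hd hi)
  simp only [mem_union, mem_range, mem_biUnion, mem_filter, mem_Ico]
  rcases lt_trichotomy k' k with hlt | rfl | hgt
  · exact .inl (hwin.2.trans_le (scaleEnd_strictMono.monotone hlt))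
  · exact .inr ⟨d, ⟨hd, (Nat.le_add_right _ _).trans hjn⟩, Nat.le_add_right _ _, by omega⟩
  · have := scaleEnd_strictMono.monotone (show k + 1 ≤ k' from hgt)
    have := scaleEnd_lt_base k'
    omega

theorem succ_mul_sum_window_lengths_le (k n : ℕ) :
    (k + 1) * ∑ d ∈ (modulus k).divisors with base k * d ≤ n, (k + 1) * d ≤ n := by
  set τ := #(modulus k).divisors
  refine Nat.le_of_mul_le_mul_left ?_ (divisors_modulus_nonempty k).card_pos
  calc τ * ((k + 1) * ∑ d ∈ (modulus k).divisors with base k * d ≤ n, (k + 1) * d)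
      = ∑ d ∈ (modulus k).divisors with base k * d ≤ n, (k + 1) ^ 2 * τ * d := by
        simp only [mul_sum]; exact sum_congr rfl fun d _ => by ring
    _ ≤ ∑ d ∈ (modulus k).divisors with base k * d ≤ n, n :=
        sum_le_sum fun d hd =>
          (Nat.mul_le_mul_right d (sq_mul_card_divisors_le_base k)).trans (mem_filter.1 hd).2
    _ ≤ τ * n := by rw [sum_const, smul_eq_mul]; exact Nat.mul_le_mul_right _ (card_filter_le _ _)

theorem cesaro_windowIndicator_le {k n : ℕ} (hn₁ : base k ≤ n) (hn₂ : n < scaleEnd (k + 1)) :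
    cesaro windowIndicator n ≤ 2 / (k + 1) := by
  classical
  set c := #{j ∈ range (n + 1) | j ∈ windowSet}
  have hcount : (k + 1) * c ≤ 2 * n :=
    calc (k + 1) * c ≤ (k + 1) * (scaleEnd k +
          ∑ d ∈ (modulus k).divisors with base k * d ≤ n, (k + 1) * d) := by
          gcongr
          refine (card_le_card (filter_windowSet_subset hn₂)).trans ((card_union_le _ _).trans ?_)
          rw [card_range]
          gcongr
          exact card_biUnion_le.trans (sum_le_sum fun d _ => by simp)
      _ ≤ base k + n := by
          rw [mul_add]
          exact add_le_add (succ_mul_scaleEnd_lt_base k).le (succ_mul_sum_window_lengths_le k n)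
      _ ≤ 2 * n := by omega
  have hsum : ∑ j ∈ range (n + 1), windowIndicator j = c := by
    simp [windowIndicator, c, sum_boole]
  rw [cesaro_apply, hsum, div_le_div_iff₀ (by positivity) (by positivity)]
  have : ((k + 1) * c : ℕ) ≤ (2 * n : ℝ) := by exact_mod_cast hcount
  push_cast at this
  linarith

theorem scaleMean_cesaro_windowIndicator_le (k : ℕ) :
    scaleMean k (cesaro windowIndicator) ≤ 2 / (k + 1) :=
  scaleMean_le_of_forall fun _ hd _ hj =>
    cesaro_windowIndicator_le (mem_Ico.1 (base_mul_add_mem_Ico hd hj)).1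
      (mem_Ico.1 (base_mul_add_mem_Ico hd hj)).2

theorem cesaro_windowIndicator_nonneg (n : ℕ) : 0 ≤ cesaro windowIndicator n := by
  rw [cesaro_apply]
  refine div_nonneg (sum_nonneg fun j _ => ?_) (by positivity)
  simp only [windowIndicator, BoundedContinuousFunction.coe_ofNormedAddCommGroup]
  split_ifs <;> norm_num

section Limit

variable {l : Filter ℕ} [l.NeBot] {B : StrongDual ℝ LInf}

theorem eq_of_tendsto_scaleMean_sub (hl : l ≤ atTop)
    (hB : ∀ x, Tendsto (fun k => scaleMean k x) l (𝓝 (B x))) {x y : LInf}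
    (h : Tendsto (fun k => scaleMean k y - scaleMean k x) atTop (𝓝 0)) : B y = B x :=
  sub_eq_zero.1 (tendsto_nhds_unique ((hB y).sub (hB x)) (h.mono_left hl))

theorem isBanachLimit_of_tendsto (hl : l ≤ atTop)
    (hB : ∀ x, Tendsto (fun k => scaleMean k x) l (𝓝 (B x))) : IsBanachLimit B := by
  refine ⟨fun x hx => ge_of_tendsto' (hB x) fun k => scaleMean_nonneg k hx, ?_, fun x => ?_⟩
  · refine tendsto_nhds_unique (hB 1) ?_
    simp only [scaleMean_one]
    exact tendsto_const_nhds
  · exact eq_of_tendsto_scaleMean_sub hl hB <| squeeze_zero_norm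
      (fun k => abs_scaleMean_shift_sub_le k x) (tendsto_div_natCast_add_one _)

theorem dil_invariant_of_tendsto (hl : l ≤ atTop)
    (hB : ∀ x, Tendsto (fun k => scaleMean k x) l (𝓝 (B x))) {m : ℕ} (hm : m ≠ 0)
    (x : LInf) :
    B (dil m x) = B x := by
  induction m using Nat.recOnMul generalizing x with
  | zero => exact absurd rfl hm
  | one => rw [dil_one]
  | prime p hp =>
    exact eq_of_tendsto_scaleMean_sub hl hB <| squeeze_zero_norm'
      ((eventually_ge_atTop p).mono fun k hk => abs_scaleMean_dil_sub_le hp (by omega) x)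
      (tendsto_div_natCast_add_one _)
  | mul a b ha hb =>
    obtain ⟨ha0, hb0⟩ := mul_ne_zero_iff.1 hm
    rw [dil_mul, ha ha0, hb hb0]

theorem cesaro_windowIndicator_ne (hl : l ≤ atTop)
    (hB : ∀ x, Tendsto (fun k => scaleMean k x) l (𝓝 (B x))) :
    B (cesaro windowIndicator) ≠ B windowIndicator := by
  have hone : B windowIndicator = 1 := tendsto_nhds_unique (hB _) <| by
    simp only [scaleMean_windowIndicator]
    exact tendsto_const_nhds
  have hzero : B (cesaro windowIndicator) = 0 := tendsto_nhds_unique (hB _) <| Tendsto.mono_left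
    (squeeze_zero (fun k => scaleMean_nonneg k cesaro_windowIndicator_nonneg)
      scaleMean_cesaro_windowIndicator_le (tendsto_div_natCast_add_one 2)) hl
  rw [hzero, hone]
  exact zero_ne_one

end Limit

end DilationBanachLimit

open DilationBanachLimit in
theorem dilation_invariant_not_cesaro_invariant :
    ∃ B : LInf →L[ℝ] ℝ, IsBanachLimit B ∧
      (∀ m : ℕ, 2 ≤ m → ∀ x : LInf, B (dil m x) = B x) ∧
      ∃ x : LInf, B (cesaro x) ≠ B x := by
  obtain ⟨B, hB⟩ := StrongDual.exists_tendsto_ultrafilter_of_norm_le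
    (Ultrafilter.of atTop) scaleMean norm_scaleMean_le
  have hl := Ultrafilter.of_le (atTop : Filter ℕ)
  exact ⟨B, isBanachLimit_of_tendsto hl hB,
    fun m hm => dil_invariant_of_tendsto hl hB (by omega),
    windowIndicator, cesaro_windowIndicator_ne hl hB⟩

end
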